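/- Reduced-cipher scalar product: for a cipher C₁ ∈ {0,1}^{N×N} with N = ℓ(n+1) and scalar α ∈ ℕ, the reduced cipher of C₅ = [[α·I_N · G_{n+1}]^ℓ · C₁ · G_{n+1}]^ℓ satisfies C₅ · G_{n+1} = ([α · G_{n+1}]^ℓ · C̃₁)^ℓ, where C̃₁ = C₁ · G_{n+1}. -/
import Mathlib


open Matrix

/-- The gadget matrix `G_n = I_n ⊗ g` with `g = (2^0, …, 2^(ℓ-1))ᵀ`. -/
def gadget (R : Type*) [Semiring R] (n ℓ : ℕ) : Matrix (Fin n × Fin ℓ) (Fin n) R :=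
  fun p k => if p.1 = k then 2 ^ (p.2 : ℕ) else 0

/-- Entrywise decomposition of a matrix into `ℓ` binary digits (`BitDecomp`). -/
def bitDecomp {ρ : Type*} (n ℓ : ℕ) (a : Matrix ρ (Fin n) ℕ) :
    Matrix ρ (Fin n × Fin ℓ) ℕ :=
  fun r p => ((a r p.1).testBit p.2).toNat

/-- Entrywise truncation `(·)^ℓ` to the `ℓ` least significant bits. -/
def truncM {ρ κ : Type*} (ℓ : ℕ) (M : Matrix ρ κ ℕ) : Matrix ρ κ ℕ :=
  M.map (· % 2 ^ ℓ)

lemma sum_testBit (m ℓ : ℕ) :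
    ∑ j : Fin ℓ, (m.testBit j).toNat * 2 ^ (j : ℕ) = m % 2 ^ ℓ := by
  induction ℓ with
  | zero => simp [Nat.mod_one]
  | succ k ih =>
    rw [Fin.sum_univ_castSucc]
    simp only [Fin.coe_castSucc, Fin.val_last, ih]
    rw [Nat.mod_pow_succ, Nat.testBit, Nat.shiftRight_eq_div_pow]
    rcases Nat.mod_two_eq_zero_or_one (m / 2 ^ k) with h | h <;>
      simp [h, Nat.one_and_eq_mod_two, mul_comm]

lemma bitDecomp_mul_gadget {ρ : Type*} [Fintype ρ] (n ℓ : ℕ) (M : Matrix ρ (Fin n) ℕ) :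
    bitDecomp n ℓ M * gadget ℕ n ℓ = truncM ℓ M := by
  ext r k
  simp only [mul_apply, bitDecomp, gadget, truncM, Matrix.map_apply]
  rw [Fintype.sum_prod_type]
  rw [Finset.sum_eq_single k]
  · simp [sum_testBit]
  · intro i _ hik
    simp [hik]
  · simp

/-- Reduced-cipher scalar product: for a binary cipher `C₁` and scalar `α`,
`C₅ = [[α·I_N·G]^ℓ · C₁ · G]^ℓ` satisfies `C₅·G = ([α·G]^ℓ · C̃₁)^ℓ` where `C̃₁ = C₁·G`. -/
theorem reduced_cipher_scalar_mul (n ℓ : ℕ) (α : ℕ)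
    (C₁ : Matrix (Fin (n + 1) × Fin ℓ) (Fin (n + 1) × Fin ℓ) ℕ)
    (h₁ : ∀ p q, C₁ p q ≤ 1) :
    (bitDecomp (n + 1) ℓ
        ((bitDecomp (n + 1) ℓ
            ((α • (1 : Matrix (Fin (n + 1) × Fin ℓ) (Fin (n + 1) × Fin ℓ) ℕ)) *
              gadget ℕ (n + 1) ℓ) * C₁) * gadget ℕ (n + 1) ℓ)) * gadget ℕ (n + 1) ℓ =
      truncM ℓ (bitDecomp (n + 1) ℓ (α • gadget ℕ (n + 1) ℓ) * (C₁ * gadget ℕ (n + 1) ℓ)) := by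
  rw [bitDecomp_mul_gadget, show (α • (1 : Matrix (Fin (n + 1) × Fin ℓ) (Fin (n + 1) × Fin ℓ) ℕ)) *
      gadget ℕ (n + 1) ℓ = α • gadget ℕ (n + 1) ℓ by rw [Matrix.smul_mul, Matrix.one_mul],
    Matrix.mul_assoc]
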